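/- Let ω be a radial weight on the unit disc with reproducing kernels B^ω_z of A²_ω. Then for all z, ζ in the unit disc, 2(1 - \overline{z}ζ) B^ω_z(ζ) = 1/ω₁ + Σ_{n=1}^∞ ((ω_{(1,2)})_{2n-1} / (ω_{2n+1} ω_{2n-1})) (\overline{z}ζ)^n, where (ω_{(1,2)})_x = ∫_0^1 r^x (1 - r²) ω(r) dr and ω_x = ∫_0^1 r^x ω(r) dr. -/

import Mathlib

open MeasureTheory Complex
open scoped ComplexConjugate

/-- The x-th moment of a radial weight. -/
noncomputable def moment (ω : ℝ → ℝ) (x : ℕ) : ℝ := ∫ r in (0:ℝ)..1, r ^ x * ω r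

/-- The modified moment (ω_{(1,2)})_x = ∫_0^1 r^x (1-r²) ω(r) dr. -/
noncomputable def momentMod (ω : ℝ → ℝ) (x : ℕ) : ℝ :=
  ∫ r in (0:ℝ)..1, r ^ x * (1 - r ^ 2) * ω r

/-- The Bergman reproducing kernel of A²_ω for a radial weight ω. -/
noncomputable def bergmanKernel (ω : ℝ → ℝ) (z ζ : ℂ) : ℂ :=
  ∑' n : ℕ, (conj z * ζ) ^ n / ((2 * moment ω (2 * n + 1) : ℝ) : ℂ)

/-!
With `w = conj z * ζ`, the kernel is `(1/2) ∑ w ^ n / ω_{2n+1}`, a power series converging on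
the unit disc because `ω_x ≥ ρ ^ x ∫_ρ^1 ω` for every `ρ < 1`. Multiplying a power series by
`1 - w` replaces its coefficients by their successive differences, and
`1/ω_{2n+3} - 1/ω_{2n+1} = (ω_{2n+1} - ω_{2n+3}) / (ω_{2n+3} ω_{2n+1})`, whose numerator is
`(ω_{(1,2)})_{2n+1}`.
-/

theorem one_sub_mul_tsum_mul_pow {R : Type*} [CommRing R] [TopologicalSpace R]
    [IsTopologicalRing R] [T2Space R] {a : ℕ → R} {w : R}
    (h : Summable fun n => a n * w ^ n) :
    (1 - w) * ∑' n, a n * w ^ n = a 0 + ∑' n, (a (n + 1) - a n) * w ^ (n + 1) := by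
  have hshift : Summable fun n => a (n + 1) * w ^ (n + 1) := (summable_nat_add_iff 1).mpr h
  have hdiff (n : ℕ) :
      (a (n + 1) - a n) * w ^ (n + 1) = a (n + 1) * w ^ (n + 1) - w * (a n * w ^ n) := by
    ring
  rw [tsum_congr hdiff, hshift.tsum_sub (h.mul_left w), h.tsum_mul_left, h.tsum_eq_zero_add]
  ring

section Moments

variable {ω : ℝ → ℝ}

theorem intervalIntegrable_pow_mul (hω_int : IntervalIntegrable ω volume 0 1) (x : ℕ) :
    IntervalIntegrable (fun r => r ^ x * ω r) volume 0 1 :=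
  hω_int.continuousOn_mul (continuous_pow x).continuousOn

theorem momentMod_eq_moment_sub (hω_int : IntervalIntegrable ω volume 0 1) (x : ℕ) :
    momentMod ω x = moment ω x - moment ω (x + 2) := by
  rw [momentMod, moment, moment, ← intervalIntegral.integral_sub
    (intervalIntegrable_pow_mul hω_int x) (intervalIntegrable_pow_mul hω_int (x + 2))]
  congr 1
  ext r
  ring

variable (hω_nonneg : ∀ r ∈ Set.Ico (0:ℝ) 1, 0 ≤ ω r) (hω_int : IntervalIntegrable ω volume 0 1)
include hω_nonneg hω_int

theorem pow_mul_integral_le_moment {ρ : ℝ} (hρ0 : 0 ≤ ρ) (hρ1 : ρ ≤ 1) (x : ℕ) :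
    ρ ^ x * ∫ s in ρ..1, ω s ≤ moment ω x := by
  have hint := intervalIntegrable_pow_mul hω_int x
  have h0ρ : Set.uIcc 0 ρ ⊆ Set.uIcc (0:ℝ) 1 := Set.uIcc_subset_uIcc_left (by simp [*])
  have hρ1' : Set.uIcc ρ 1 ⊆ Set.uIcc (0:ℝ) 1 := Set.uIcc_subset_uIcc_right (by simp [*])
  have hhead : 0 ≤ ∫ r in (0:ℝ)..ρ, r ^ x * ω r := by
    simpa using intervalIntegral.integral_mono_on_of_le_Ioo hρ0 intervalIntegrable_const
      (hint.mono_set h0ρ) fun r hr => mul_nonneg (pow_nonneg hr.1.le x)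
        (hω_nonneg r ⟨hr.1.le, hr.2.trans_le hρ1⟩)
  have htail : ∫ r in ρ..1, ρ ^ x * ω r ≤ ∫ r in ρ..1, r ^ x * ω r :=
    intervalIntegral.integral_mono_on_of_le_Ioo hρ1 ((hω_int.mono_set hρ1').const_mul _)
      (hint.mono_set hρ1') fun r hr => mul_le_mul_of_nonneg_right
        (pow_le_pow_left₀ hρ0 hr.1.le x) (hω_nonneg r ⟨hρ0.trans hr.1.le, hr.2⟩)
  rw [moment, ← intervalIntegral.integral_add_adjacent_intervals (hint.mono_set h0ρ)
    (hint.mono_set hρ1'), ← intervalIntegral.integral_const_mul]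
  linarith

variable (hω_pos : ∀ r ∈ Set.Ico (0:ℝ) 1, 0 < ∫ s in r..1, ω s)
include hω_pos

theorem moment_pos (x : ℕ) : 0 < moment ω x :=
  (mul_pos (by positivity) (hω_pos (1 / 2) (by norm_num))).trans_le
    (pow_mul_integral_le_moment hω_nonneg hω_int (by norm_num) (by norm_num) x)

theorem inv_moment_sub_inv_moment (x : ℕ) :
    (moment ω (x + 2))⁻¹ - (moment ω x)⁻¹ = momentMod ω x / (moment ω (x + 2) * moment ω x) := by
  have h₁ := moment_pos hω_nonneg hω_int hω_pos x
  have h₂ := moment_pos hω_nonneg hω_int hω_pos (x + 2)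
  rw [momentMod_eq_moment_sub hω_int]
  field_simp

theorem summable_inv_moment_mul_pow {w : ℂ} (hw : ‖w‖ < 1) :
    Summable fun n => (moment ω (2 * n + 1) : ℂ)⁻¹ * w ^ n := by
  obtain ⟨ρ, hρ0, hρ1, hwρ⟩ : ∃ ρ : ℝ, 0 < ρ ∧ ρ < 1 ∧ ‖w‖ < ρ ^ 2 :=
    ⟨(‖w‖ + 1) / 2, by positivity, by linarith, by nlinarith [sq_nonneg (‖w‖ - 1)]⟩
  set c := ∫ s in ρ..1, ω s
  have hc : 0 < c := hω_pos ρ ⟨hρ0.le, hρ1⟩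
  have hbound (n : ℕ) :
      ‖(moment ω (2 * n + 1) : ℂ)⁻¹ * w ^ n‖ ≤ (ρ * c)⁻¹ * (‖w‖ / ρ ^ 2) ^ n := by
    have hm := pow_mul_integral_le_moment hω_nonneg hω_int hρ0.le hρ1.le (2 * n + 1)
    rw [norm_mul, norm_inv, norm_pow, Complex.norm_real, Real.norm_of_nonneg
      (moment_pos hω_nonneg hω_int hω_pos _).le, div_pow, ← pow_mul,
      show (ρ * c)⁻¹ * (‖w‖ ^ n / ρ ^ (2 * n)) = (ρ ^ (2 * n + 1) * c)⁻¹ * ‖w‖ ^ n by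
        field_simp; ring]
    gcongr
  refine Summable.of_norm_bounded ((summable_geometric_of_lt_one (by positivity) ?_).mul_left _)
    hbound
  rwa [div_lt_one (by positivity)]

end Moments

theorem two_mul_bergmanKernel (ω : ℝ → ℝ) (z ζ : ℂ) :
    2 * bergmanKernel ω z ζ = ∑' n, (moment ω (2 * n + 1) : ℂ)⁻¹ * (conj z * ζ) ^ n := by
  rw [bergmanKernel, ← tsum_mul_left]
  congr 1
  ext n
  push_cast
  rw [← mul_div_assoc, mul_div_mul_left _ _ two_ne_zero, div_eq_inv_mul]

theorem kernel_series_identity (ω : ℝ → ℝ)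
    (hω_nonneg : ∀ r ∈ Set.Ico (0:ℝ) 1, 0 ≤ ω r)
    (hω_int : IntervalIntegrable ω volume 0 1)
    (hω_pos : ∀ r ∈ Set.Ico (0:ℝ) 1, 0 < ∫ s in r..1, ω s)
    (z ζ : ℂ) (hz : z ∈ Metric.ball (0:ℂ) 1) (hζ : ζ ∈ Metric.ball (0:ℂ) 1) :
    2 * (1 - conj z * ζ) * bergmanKernel ω z ζ =
      ((1 / moment ω 1 : ℝ) : ℂ) +
        ∑' n : ℕ,
          ((momentMod ω (2 * (n + 1) - 1) /
              (moment ω (2 * (n + 1) + 1) * moment ω (2 * (n + 1) - 1)) : ℝ) : ℂ) *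
            (conj z * ζ) ^ (n + 1) := by
  have hw : ‖conj z * ζ‖ < 1 := by
    rw [mem_ball_zero_iff] at hz hζ
    rw [norm_mul, RCLike.norm_conj]
    exact mul_lt_one_of_nonneg_of_lt_one_left (norm_nonneg z) hz hζ.le
  rw [mul_assoc, mul_left_comm, two_mul_bergmanKernel,
    one_sub_mul_tsum_mul_pow (summable_inv_moment_mul_pow hω_nonneg hω_int hω_pos hw)]
  congr 1
  · simp
  · refine tsum_congr fun n => ?_
    rw [show 2 * (n + 1) + 1 = 2 * n + 1 + 2 by ring, show 2 * (n + 1) - 1 = 2 * n + 1 by omega,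
      ← inv_moment_sub_inv_moment hω_nonneg hω_int hω_pos]
    push_cast
    ring
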